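/- arXiv:1106.1967 — 3 statements merged into one kernel-verified Lean document; each statement's English description precedes it below -/
import Mathlib

section
/- Let p ≥ 1 and 0 ≤ k ≤ p. Let f : ℝ^p → ℝ be a C_c^∞ function, let I be a nonempty subset of {1,…,k} with l = |I| elements, and let j ∈ ℕ^p be a multi-index with j_i ≥ 1 for every i ∈ I and j_i = 0 for every i ∉ I. Then ∫_{ℝ₊^k × ℝ^{p−k}} (∂^j f)(x) dx = (−1)^l · ∫_F (∂^{j↓} f), where j↓ is the multi-index with (j↓)_i = j_i − 1 for i ∈ I and (j↓)_i = 0 otherwise, and ∫_F denotes the iterated integral of ∂^{j↓} f over the boundary face F = {x ∈ ℝ^p : x_i = 0 for i ∈ I, x_i ∈ ℝ₊ for i ∈ {1,…,k}\I, x_i ∈ ℝ for i > k}, i.e. the integral over the remaining p − l coordinates with the coordinates indexed by I set equal to 0. -/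
open MeasureTheory
open scoped ContDiff

/-- The partial derivative of `f : ℝ^p → ℝ` in the `i`-th coordinate direction. -/
noncomputable def pd {p : ℕ} (i : Fin p) (f : (Fin p → ℝ) → ℝ) : (Fin p → ℝ) → ℝ :=
  fun x => fderiv ℝ f x (Pi.single i 1)

/-- The iterated partial derivative `∂^j f = ∂^{j_1}_{x_1} ⋯ ∂^{j_p}_{x_p} f`
for a multi-index `j : Fin p → ℕ`. -/
noncomputable def multiPd {p : ℕ} (j : Fin p → ℕ) (f : (Fin p → ℝ) → ℝ) :
    (Fin p → ℝ) → ℝ :=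
  (List.finRange p).foldr (fun i g => (pd i)^[j i] g) f

noncomputable def pdG {ι : Type} [Fintype ι] [DecidableEq ι] (i : ι) (g : (ι → ℝ) → ℝ) : (ι → ℝ) → ℝ :=
  fun x => fderiv ℝ g x (Pi.single i 1)

lemma pd_eq_pdG {p : ℕ} (i : Fin p) : pd i = pdG i := rfl

variable {ι : Type} [Fintype ι] [DecidableEq ι]

lemma infty_add_one : (∞ : WithTop ℕ∞) + 1 ≤ ∞ := by
  norm_num

theorem pdG_contDiff {g : (ι → ℝ) → ℝ} (hg : ContDiff ℝ ∞ g) (i : ι) :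
    ContDiff ℝ ∞ (pdG i g) :=
  (hg.fderiv_right infty_add_one).clm_apply contDiff_const

theorem pdG_hcs {g : (ι → ℝ) → ℝ} (hg : HasCompactSupport g) (i : ι) :
    HasCompactSupport (pdG i g) :=
  (hg.fderiv ℝ).comp_left (g := fun L : (ι → ℝ) →L[ℝ] ℝ => L (Pi.single i 1)) (by simp)

theorem pdG_comm {g : (ι → ℝ) → ℝ} (hg : ContDiff ℝ ∞ g) (i b : ι) :
    pdG i (pdG b g) = pdG b (pdG i g) := by
  funext x
  have hdf : Differentiable ℝ (fderiv ℝ g) :=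
    (hg.fderiv_right infty_add_one).differentiable (by norm_num)
  have h1 : ∀ v w : ι → ℝ, fderiv ℝ (fderiv ℝ g) x v w = fderiv ℝ (fderiv ℝ g) x w v :=
    fun v w => second_derivative_symmetric
      (fun y => (hg.differentiable (by norm_num) y).hasFDerivAt)
      (hdf x).hasFDerivAt v w
  have h2 : ∀ c : ι, fderiv ℝ (pdG c g) x = (fderiv ℝ (fderiv ℝ g) x).flip (Pi.single c 1) := by
    intro c
    have := fderiv_clm_apply (𝕜 := ℝ) (c := fderiv ℝ g) (u := fun _ => Pi.single c 1) (x := x)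
      (hdf x) (differentiableAt_const _)
    have h3 : pdG c g = fun y => (fderiv ℝ g y) ((fun _ : ι → ℝ => (Pi.single c 1 : ι → ℝ)) y) := rfl
    rw [h3, this]
    simp
  show fderiv ℝ (pdG b g) x (Pi.single i 1) = fderiv ℝ (pdG i g) x (Pi.single b 1)
  rw [h2, h2]
  simpa using h1 (Pi.single i 1) (Pi.single b 1)

noncomputable def mPdL {ι : Type} [Fintype ι] [DecidableEq ι] (L : List ι) (g : (ι → ℝ) → ℝ) :
    (ι → ℝ) → ℝ :=
  L.foldr (fun i h => pdG i h) g

@[simp] lemma mPdL_nil (g : (ι → ℝ) → ℝ) : mPdL [] g = g := rfl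
@[simp] lemma mPdL_cons (i : ι) (L : List ι) (g : (ι → ℝ) → ℝ) :
    mPdL (i :: L) g = pdG i (mPdL L g) := rfl

lemma mPdL_append (L M : List ι) (g : (ι → ℝ) → ℝ) :
    mPdL (L ++ M) g = mPdL L (mPdL M g) := by
  simp [mPdL, List.foldr_append]

theorem mPdL_contDiff {g : (ι → ℝ) → ℝ} (hg : ContDiff ℝ ∞ g) (L : List ι) :
    ContDiff ℝ ∞ (mPdL L g) := by
  induction L with
  | nil => exact hg
  | cons a L ih => exact pdG_contDiff ih a

theorem mPdL_hcs {g : (ι → ℝ) → ℝ} (hg : HasCompactSupport g) (L : List ι) :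
    HasCompactSupport (mPdL L g) := by
  induction L with
  | nil => exact hg
  | cons a L ih => exact pdG_hcs ih a

theorem mPdL_perm {g : (ι → ℝ) → ℝ} (hg : ContDiff ℝ ∞ g) {L M : List ι} (h : L.Perm M) :
    mPdL L g = mPdL M g := by
  induction h with
  | nil => rfl
  | cons a _ ih => simp [ih]
  | swap a b L => simp [pdG_comm (mPdL_contDiff hg L)]
  | trans _ _ ih1 ih2 => exact ih1.trans ih2

lemma mPdL_replicate (n : ℕ) (i : ι) (g : (ι → ℝ) → ℝ) :
    mPdL (List.replicate n i) g = (pdG i)^[n] g := by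
  induction n with
  | zero => rfl
  | succ n ih => simp [List.replicate_succ, ih, Function.iterate_succ_apply']

/-- commute a single `pdG` with an affine coordinate-inclusion. -/
theorem pdG_comp_affine {α β : Type} [Fintype α] [DecidableEq α] [Fintype β] [DecidableEq β]
    {φ : (α → ℝ) → (β → ℝ)} {T : (α → ℝ) →L[ℝ] (β → ℝ)}
    (hφ : ∀ y, HasFDerivAt φ (T : (α → ℝ) →L[ℝ] (β → ℝ)) y)
    {i : α} {b : β} (hT : T (Pi.single i 1) = Pi.single b 1)
    {g : (β → ℝ) → ℝ} (hg : Differentiable ℝ g) :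
    pdG i (g ∘ φ) = (pdG b g) ∘ φ := by
  funext y
  have : HasFDerivAt (g ∘ φ) (((fderiv ℝ g (φ y)).comp T)) y :=
    (hg (φ y)).hasFDerivAt.comp y (hφ y)
  show fderiv ℝ (g ∘ φ) y (Pi.single i 1) = fderiv ℝ g (φ y) (Pi.single b 1)
  rw [this.fderiv]
  simp [hT]

theorem mPdL_comp_affine {α β : Type} [Fintype α] [DecidableEq α] [Fintype β] [DecidableEq β]
    {φ : (α → ℝ) → (β → ℝ)} {T : (α → ℝ) →L[ℝ] (β → ℝ)}
    (hφ : ∀ y, HasFDerivAt φ (T : (α → ℝ) →L[ℝ] (β → ℝ)) y)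
    {σ : α → β} (hT : ∀ i, T (Pi.single i 1) = Pi.single (σ i) 1)
    {g : (β → ℝ) → ℝ} (hg : ContDiff ℝ ∞ g) (L : List α) :
    mPdL L (g ∘ φ) = (mPdL (L.map σ) g) ∘ φ := by
  induction L with
  | nil => rfl
  | cons a L ih =>
    simp only [mPdL_cons, List.map_cons, ih]
    exact pdG_comp_affine hφ (hT a) ((mPdL_contDiff hg (L.map σ)).differentiable (by norm_num))

theorem hcs_comp {E F : Type*} [NormedAddCommGroup E] [NormedAddCommGroup F] [ProperSpace E]
    {φ : E → F} (hc : Continuous φ) (hn : ∀ w, ‖w‖ ≤ ‖φ w‖) {g : F → ℝ}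
    (hg : HasCompactSupport g) : HasCompactSupport (g ∘ φ) := by
  obtain ⟨R, hR⟩ : ∃ R, ∀ x ∈ tsupport g, ‖x‖ ≤ R := hg.isBounded.exists_norm_le
  have hsub : tsupport (g ∘ φ) ⊆ φ ⁻¹' (tsupport g) := by
    apply closure_minimal _ (hg.isClosed.preimage hc)
    intro x hx
    exact subset_closure (by simpa [Function.support] using hx)
  apply IsCompact.of_isClosed_subset ?_ (isClosed_tsupport _) hsub
  apply Metric.isCompact_of_isClosed_isBounded (hg.isClosed.preimage hc)
  apply Metric.isBounded_closedBall (x := (0:E)) (r := R) |>.subset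
  intro w hw
  simp only [Metric.mem_closedBall, dist_zero_right]
  exact le_trans (hn w) (hR _ hw)

noncomputable def splitEquiv {ι : Type} [Fintype ι] (P : ι → Prop) [DecidablePred P] :
    (ι → ℝ) ≃ᵐ ({i // P i} → ℝ) × ({i // ¬ P i} → ℝ) :=
  MeasurableEquiv.piEquivPiSubtypeProd (fun _ => ℝ) P

lemma splitEquiv_symm_apply {ι : Type} [Fintype ι] (P : ι → Prop) [DecidablePred P]
    (z : {i // P i} → ℝ) (w : {i // ¬ P i} → ℝ) (i : ι) :
    (splitEquiv P).symm (z, w) i = if h : P i then z ⟨i, h⟩ else w ⟨i, h⟩ := rfl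

lemma splitEquiv_mp {ι : Type} [Fintype ι] (P : ι → Prop) [DecidablePred P] :
    MeasurePreserving ((splitEquiv P).symm) := by
  exact (volume_preserving_piEquivPiSubtypeProd (fun _ : ι => ℝ) P).symm

theorem setIntegral_split {ι : Type} [Fintype ι] (P : ι → Prop) [DecidablePred P]
    {F : (ι → ℝ) → ℝ} (hF : Integrable F) {S : Set (ι → ℝ)}
    {S₁ : Set ({i // P i} → ℝ)} {S₂ : Set ({i // ¬ P i} → ℝ)}
    (h : ((splitEquiv P).symm) ⁻¹' S = S₁ ×ˢ S₂) :
    ∫ x in S, F x = ∫ z in S₁, ∫ w in S₂, F ((splitEquiv P).symm (z, w)) := by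
  have mp := splitEquiv_mp P
  have emb := (MeasurableEquiv.measurableEmbedding (splitEquiv P).symm)
  rw [← mp.setIntegral_preimage_emb emb F S, h]
  have hint : Integrable (fun p => F ((splitEquiv P).symm p))
      (((volume : Measure ({i // P i} → ℝ)).restrict S₁).prod
        ((volume : Measure ({i // ¬ P i} → ℝ)).restrict S₂)) := by
    rw [Measure.prod_restrict, ← Measure.volume_eq_prod]
    exact ((mp.integrable_comp_emb emb).2 hF).restrict
  rw [Measure.volume_eq_prod, ← Measure.prod_restrict]
  exact integral_prod _ hint

section SplitSec
variable {ι : Type} [Fintype ι] [DecidableEq ι] (P : ι → Prop) [DecidablePred P]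

noncomputable def secT1 : ({i // P i} → ℝ) →L[ℝ] (ι → ℝ) :=
  ContinuousLinearMap.pi (fun i => if h : P i then ContinuousLinearMap.proj ⟨i, h⟩ else 0)

noncomputable def secT2 : ({i // ¬ P i} → ℝ) →L[ℝ] (ι → ℝ) :=
  ContinuousLinearMap.pi (fun i => if h : P i then 0 else ContinuousLinearMap.proj ⟨i, h⟩)

lemma secT1_apply (z : {i // P i} → ℝ) (i : ι) :
    secT1 P z i = if h : P i then z ⟨i, h⟩ else 0 := by
  simp only [secT1, ContinuousLinearMap.pi_apply]
  rw [apply_dite (fun L : ({i // P i} → ℝ) →L[ℝ] ℝ => L z)]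
  simp

lemma secT2_apply (w : {i // ¬ P i} → ℝ) (i : ι) :
    secT2 P w i = if h : P i then 0 else w ⟨i, h⟩ := by
  simp only [secT2, ContinuousLinearMap.pi_apply]
  rw [apply_dite (fun L : ({i // ¬ P i} → ℝ) →L[ℝ] ℝ => L w)]
  simp

lemma splitEquiv_symm_eq (z : {i // P i} → ℝ) (w : {i // ¬ P i} → ℝ) :
    (splitEquiv P).symm (z, w) = secT1 P z + secT2 P w := by
  funext i
  rw [splitEquiv_symm_apply]
  simp only [Pi.add_apply, secT1_apply, secT2_apply]
  by_cases h : P i <;> simp [h]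

lemma secT1_single (i' : {i // P i}) :
    secT1 P (Pi.single i' 1) = Pi.single (i' : ι) 1 := by
  funext b
  rw [secT1_apply]
  by_cases hb : P b
  · simp only [dif_pos hb, Pi.single_apply]
    by_cases hbi : b = (i' : ι)
    · have : (⟨b, hb⟩ : {i // P i}) = i' := Subtype.ext hbi
      simp [this, hbi]
    · have : (⟨b, hb⟩ : {i // P i}) ≠ i' := fun e => hbi (congrArg Subtype.val e)
      simp [this, hbi]
  · have : b ≠ (i' : ι) := fun e => hb (e ▸ i'.2)
    simp [dif_neg hb, Pi.single_apply, this]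

lemma secT2_single (i' : {i // ¬ P i}) :
    secT2 P (Pi.single i' 1) = Pi.single (i' : ι) 1 := by
  funext b
  rw [secT2_apply]
  by_cases hb : P b
  · have : b ≠ (i' : ι) := fun e => i'.2 (e ▸ hb)
    simp [dif_pos hb, Pi.single_apply, this]
  · simp only [dif_neg hb, Pi.single_apply]
    by_cases hbi : b = (i' : ι)
    · have : (⟨b, hb⟩ : {i // ¬ P i}) = i' := Subtype.ext hbi
      simp [this, hbi]
    · have : (⟨b, hb⟩ : {i // ¬ P i}) ≠ i' := fun e => hbi (congrArg Subtype.val e)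
      simp [this, hbi]

lemma norm_le_split_1 (z : {i // P i} → ℝ) (w : {i // ¬ P i} → ℝ) :
    ‖z‖ ≤ ‖(splitEquiv P).symm (z, w)‖ := by
  rw [pi_norm_le_iff_of_nonneg (norm_nonneg _)]
  intro i'
  have h := norm_le_pi_norm ((splitEquiv P).symm (z, w)) (i' : ι)
  rwa [splitEquiv_symm_apply, dif_pos i'.2] at h

lemma norm_le_split_2 (z : {i // P i} → ℝ) (w : {i // ¬ P i} → ℝ) :
    ‖w‖ ≤ ‖(splitEquiv P).symm (z, w)‖ := by
  rw [pi_norm_le_iff_of_nonneg (norm_nonneg _)]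
  intro i'
  have h := norm_le_pi_norm ((splitEquiv P).symm (z, w)) (i' : ι)
  rwa [splitEquiv_symm_apply, dif_neg i'.2] at h

end SplitSec

lemma integral_uniquePi {κu : Type} [Fintype κu] [Unique κu] (G : (κu → ℝ) → ℝ) :
    ∫ w in {w : κu → ℝ | ∀ i, 0 < w i}, G w = ∫ t in Set.Ioi (0:ℝ), G (fun _ => t) := by
  have mp := (volume_preserving_funUnique κu ℝ).symm
  have emb := (MeasurableEquiv.funUnique κu ℝ).symm.measurableEmbedding
  have key := mp.setIntegral_preimage_emb emb G {w : κu → ℝ | ∀ i, 0 < w i}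
  have hfin : (Unique.fintype : Fintype κu) = ‹Fintype κu› := Subsingleton.elim _ _
  rw [hfin] at key
  rw [← key]
  have hset : (⇑(MeasurableEquiv.funUnique κu ℝ).symm) ⁻¹' {w : κu → ℝ | ∀ i, 0 < w i}
      = Set.Ioi (0:ℝ) := by
    ext t
    simp only [Set.mem_preimage, Set.mem_setOf_eq, Set.mem_Ioi]
    constructor
    · intro h; simpa using h default
    · intro h i; simpa using h
  rw [hset]
  rfl

lemma count_filter_ne {κ : Type} [DecidableEq κ] (L : List κ) (a i : κ) :
    (L.filter (· ≠ a)).count i = if i = a then 0 else L.count i := by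
  by_cases h : i = a
  · subst h
    simp [List.count_eq_zero, List.mem_filter]
  · rw [List.count_filter (by simpa using h)]
    simp [h]

theorem beqInst_eq {α : Type} [DecidableEq α] (inst : BEq α) [hl : @LawfulBEq α inst] :
    instBEqOfDecidableEq = inst := by
  cases inst with
  | mk f =>
    unfold instBEqOfDecidableEq
    congr
    funext x y
    have := @beq_iff_eq α ⟨f⟩ hl x y
    rw [Bool.eq_iff_iff]; simpa using this.symm

theorem lemA : ∀ (n : ℕ) (κ : Type) [Fintype κ] [DecidableEq κ], Fintype.card κ = n →
    ∀ (g : (κ → ℝ) → ℝ), ContDiff ℝ ∞ g → HasCompactSupport g →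
    ∀ (m : κ → ℕ), (∀ i, 1 ≤ m i) → ∀ (L M : List κ),
    (∀ i, L.count i = m i) → (∀ i, M.count i = m i - 1) →
    ∫ w in {w : κ → ℝ | ∀ i, 0 < w i}, mPdL L g w = (-1 : ℝ)^n * mPdL M g 0 := by
  intro n
  induction n with
  | zero =>
    intro κ _ _ hcard g hg hcs m hm L M hL hM
    haveI : IsEmpty κ := Fintype.card_eq_zero_iff.mp hcard
    have hL0 : L = [] := by
      cases L with
      | nil => rfl
      | cons a _ => exact isEmptyElim a
    have hM0 : M = [] := by
      cases M with
      | nil => rfl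
      | cons a _ => exact isEmptyElim a
    subst hL0; subst hM0
    have huniv : {w : κ → ℝ | ∀ i, 0 < w i} = Set.univ :=
      Set.eq_univ_of_forall (fun w i => isEmptyElim i)
    rw [huniv, Measure.restrict_univ]
    rw [integral_unique]
    have hvol : (volume : Measure (κ → ℝ)) Set.univ = 1 := by
      rw [MeasureTheory.volume_pi, Measure.pi_univ]
      simp
    rw [measureReal_def, hvol]
    simp only [mPdL, List.foldr_nil, pow_zero, one_mul, ENNReal.toReal_one, one_smul]
    exact congrArg g (Subsingleton.elim _ _)
  | succ n ih =>
    intro κ _ _ hcard g hg hcs m hm L M hL hM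
    have hne : Nonempty κ := Fintype.card_pos_iff.mp (by omega)
    obtain ⟨a⟩ := hne
    set P : κ → Prop := fun i => i ≠ a with hPdef
    haveI uinst : Unique {i : κ // ¬ P i} :=
      ⟨⟨⟨a, by simp [hPdef]⟩⟩, fun x => Subtype.ext (by
        have := x.2; simpa [hPdef, not_not] using this)⟩
    set c := m a with hc
    have hc1 : 1 ≤ c := hm a
    set Lf := L.filter (· ≠ a) with hLfdef
    have hLf : ∀ i, Lf.count i = if i = a then 0 else m i := by
      intro i; rw [hLfdef, count_filter_ne, hL]
    have hperm : L.Perm (List.replicate c a ++ Lf) := by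
      apply List.perm_iff_count.2
      intro i
      rw [List.count_append, List.count_replicate, hLf, hL]
      rcases eq_or_ne i a with h | h
      · simp [h, hc]
      · simp [h, Ne.symm h]
    set H := mPdL (List.replicate (c-1) a ++ Lf) g with hHdef
    have hHcd : ContDiff ℝ ∞ H := mPdL_contDiff hg _
    have hHcs : HasCompactSupport H := mPdL_hcs hcs _
    have key1 : mPdL L g = pdG a H := by
      rw [mPdL_perm hg hperm]
      have : List.replicate c a = a :: List.replicate (c-1) a := by
        conv_lhs => rw [show c = (c-1)+1 by omega]
        rw [List.replicate_succ]
      rw [this, List.cons_append, mPdL_cons, hHdef]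
    have hFcd : ContDiff ℝ ∞ (pdG a H) := pdG_contDiff hHcd a
    have hFcs : HasCompactSupport (pdG a H) := pdG_hcs hHcs a
    have hFint : Integrable (pdG a H) := hFcd.continuous.integrable_of_hasCompactSupport hFcs
    have hpre : (⇑(splitEquiv P).symm) ⁻¹' {w : κ → ℝ | ∀ i, 0 < w i}
        = {y : {i // P i} → ℝ | ∀ i', 0 < y i'} ×ˢ {w : {i // ¬ P i} → ℝ | ∀ i', 0 < w i'} := by
      ext ⟨y, w⟩
      simp only [Set.mem_preimage, Set.mem_setOf_eq, Set.mem_prod, splitEquiv_symm_apply]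
      constructor
      · intro h
        refine ⟨fun i' => ?_, fun i' => ?_⟩
        · have := h (i' : κ); rwa [dif_pos i'.2] at this
        · have := h (i' : κ); rwa [dif_neg i'.2] at this
      · rintro ⟨h1, h2⟩ i
        by_cases h : P i
        · rw [dif_pos h]; exact h1 ⟨i, h⟩
        · rw [dif_neg h]; exact h2 ⟨i, h⟩
    rw [key1, setIntegral_split P hFint hpre]
    -- inner integral
    have inner_eq : ∀ y : {i // P i} → ℝ,
        (∫ w in {w : {i // ¬ P i} → ℝ | ∀ i', 0 < w i'}, pdG a H ((splitEquiv P).symm (y, w)))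
          = -(H (secT1 P y)) := by
      intro y
      rw [integral_uniquePi (fun w => pdG a H ((splitEquiv P).symm (y, w)))]
      set γ : ℝ → (κ → ℝ) := fun t => (splitEquiv P).symm (y, fun _ => t) with hγdef
      have hγ : γ = fun t => γ 0 + t • (Pi.single a 1 : κ → ℝ) := by
        funext t i
        simp only [hγdef, splitEquiv_symm_apply, Pi.add_apply, Pi.smul_apply, smul_eq_mul]
        by_cases h : P i
        · rw [dif_pos h, dif_pos h]
          have hia : i ≠ a := h
          simp [Pi.single_apply, hia]
        · rw [dif_neg h, dif_neg h]
          have hia : i = a := not_not.mp h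
          simp [Pi.single_apply, hia]
      have hγcd : ContDiff ℝ ∞ γ := by
        rw [hγ]
        exact contDiff_const.add (contDiff_id.smul contDiff_const)
      set ψ : ℝ → ℝ := fun t => H (γ t) with hψdef
      have hψcd : ContDiff ℝ 1 ψ := (hHcd.comp hγcd).of_le (by norm_num)
      have hγa : ∀ t, γ t a = t := by
        intro t
        simp only [hγdef, splitEquiv_symm_apply]
        rw [dif_neg (by simp [hPdef])]
      have hψcs : HasCompactSupport ψ := by
        apply hcs_comp hγcd.continuous _ hHcs
        intro t
        calc ‖t‖ = ‖γ t a‖ := by rw [hγa]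
        _ ≤ ‖γ t‖ := norm_le_pi_norm (γ t) a
      have hγd : ∀ t, HasDerivAt γ (Pi.single a 1 : κ → ℝ) t := by
        intro t
        rw [hγ]
        simpa using ((hasDerivAt_id t).smul_const (Pi.single a 1 : κ → ℝ)).const_add (γ 0)
      have hderiv : ∀ t, deriv ψ t = pdG a H (γ t) := by
        intro t
        have hdH := ((hHcd.differentiable (by norm_num)) (γ t)).hasFDerivAt
        exact (hdH.comp_hasDerivAt t (hγd t)).deriv
      have : ∫ t in Set.Ioi (0:ℝ), pdG a H ((splitEquiv P).symm (y, fun _ => t))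
          = ∫ t in Set.Ioi (0:ℝ), deriv ψ t := by
        apply integral_congr_ae
        filter_upwards with t
        rw [hderiv t, hγdef]
      rw [this, hψcs.integral_Ioi_deriv_eq hψcd 0]
      have : γ 0 = secT1 P y := by
        funext i
        simp only [hγdef, splitEquiv_symm_apply, secT1_apply]
      rw [hψdef]
      simp only [this]
    rw [integral_congr_ae (Filter.Eventually.of_forall inner_eq)]
    rw [integral_neg]
    -- slice commute and IH
    have hmemLf : ∀ i ∈ Lf, P i := by
      intro i hi
      have := (List.mem_filter.1 hi).2
      simpa [hPdef] using this
    set Lf2 : List {i // P i} := Lf.attach.map (fun x => ⟨x.1, hmemLf x.1 x.2⟩) with hLf2def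
    have hLf2map : Lf2.map Subtype.val = Lf := by
      rw [hLf2def, List.map_map]
      exact List.attach_map_subtype_val Lf
    have hHalt : H = mPdL Lf (mPdL (List.replicate (c-1) a) g) := by
      rw [hHdef, mPdL_perm hg (List.perm_append_comm (l₁ := List.replicate (c-1) a) (l₂ := Lf)),
        mPdL_append]
    set gc := mPdL (List.replicate (c-1) a) g with hgc
    have hgccd : ContDiff ℝ ∞ gc := mPdL_contDiff hg _
    have hgccs : HasCompactSupport gc := mPdL_hcs hcs _
    have hnorm1 : ∀ y2 : {i // P i} → ℝ, ‖y2‖ ≤ ‖secT1 P y2‖ := by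
      intro y2
      have h := norm_le_split_1 P y2 0
      rw [splitEquiv_symm_eq] at h
      simpa using h
    have hg'cd : ContDiff ℝ ∞ (gc ∘ ⇑(secT1 P)) := hgccd.comp (secT1 P).contDiff
    have hg'cs : HasCompactSupport (gc ∘ ⇑(secT1 P)) :=
      hcs_comp (secT1 P).continuous hnorm1 hgccs
    have hslice : mPdL Lf2 (gc ∘ ⇑(secT1 P)) = (mPdL Lf gc) ∘ ⇑(secT1 P) := by
      have h := mPdL_comp_affine (fun y2 => (secT1 P).hasFDerivAt)
        (fun i' => secT1_single P i') hgccd Lf2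
      rwa [hLf2map] at h
    have hcard' : Fintype.card {i // P i} = n := by
      have h := Fintype.card_subtype_compl (p := fun i : κ => i = a)
      rw [Fintype.card_subtype_eq, hcard] at h
      simpa [hPdef] using h
    have hLf2count : ∀ i' : {i // P i}, Lf2.count i' = m i'.1 := by
      intro i'
      have h1 : (Lf2.map Subtype.val).count i'.1 = Lf2.count i' :=
        List.count_map_of_injective _ _ Subtype.val_injective _
      rw [hLf2map] at h1
      rw [← h1, hLf i'.1, if_neg i'.2]
    set Mf := M.filter (· ≠ a) with hMfdef
    have hMf : ∀ i, Mf.count i = if i = a then 0 else m i - 1 := by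
      intro i; rw [hMfdef, count_filter_ne, hM]
    have hmemMf : ∀ i ∈ Mf, P i := by
      intro i hi
      have := (List.mem_filter.1 hi).2
      simpa [hPdef] using this
    set Mf2 : List {i // P i} := Mf.attach.map (fun x => ⟨x.1, hmemMf x.1 x.2⟩) with hMf2def
    have hMf2map : Mf2.map Subtype.val = Mf := by
      rw [hMf2def, List.map_map]
      exact List.attach_map_subtype_val Mf
    have hMf2count : ∀ i' : {i // P i}, Mf2.count i' = m i'.1 - 1 := by
      intro i'
      have h1 : (Mf2.map Subtype.val).count i'.1 = Mf2.count i' :=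
        List.count_map_of_injective _ _ Subtype.val_injective _
      rw [hMf2map] at h1
      rw [← h1, hMf i'.1, if_neg i'.2]
    have IH := ih {i // P i} hcard' (gc ∘ ⇑(secT1 P)) hg'cd hg'cs
      (fun i' => m i'.1) (fun i' => hm i'.1) Lf2 Mf2 (by rw [beqInst_eq Subtype.instBEq]; exact hLf2count)
        (by rw [beqInst_eq Subtype.instBEq]; exact hMf2count)
    have hmid : (∫ y2 in {y2 : {i // P i} → ℝ | ∀ i', 0 < y2 i'}, H (secT1 P y2))
        = (-1:ℝ)^n * mPdL Mf2 (gc ∘ ⇑(secT1 P)) 0 := by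
      rw [← IH]
      apply integral_congr_ae
      filter_upwards with y2
      rw [hHalt]
      exact (congrFun hslice y2).symm
    rw [hmid]
    have hfin : mPdL Mf2 (gc ∘ ⇑(secT1 P)) 0 = mPdL M g 0 := by
      have hsliceM : mPdL Mf2 (gc ∘ ⇑(secT1 P)) = (mPdL Mf gc) ∘ ⇑(secT1 P) := by
        have h := mPdL_comp_affine (fun y2 => (secT1 P).hasFDerivAt)
          (fun i' => secT1_single P i') hgccd Mf2
        rwa [hMf2map] at h
      have h0 := congrFun hsliceM 0
      rw [h0]
      simp only [Function.comp_apply, map_zero]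
      have h2 : mPdL Mf gc = mPdL (Mf ++ List.replicate (c-1) a) g := by
        rw [mPdL_append, hgc]
      have hpermM : (Mf ++ List.replicate (c-1) a).Perm M := by
        apply List.perm_iff_count.2
        intro i
        rw [List.count_append, List.count_replicate, hMf, hM]
        rcases eq_or_ne i a with h | h
        · simp [h, hc]
        · simp [h, Ne.symm h]
      rw [h2, mPdL_perm hg hpermM]
    rw [hfin, pow_succ]
    ring

lemma foldr_eq_mPdL {p : ℕ} (j : Fin p → ℕ) (f : (Fin p → ℝ) → ℝ) (L : List (Fin p)) :
    L.foldr (fun i g => (pdG i)^[j i] g) f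
      = mPdL (L.flatMap fun i => List.replicate (j i) i) f := by
  induction L with
  | nil => rfl
  | cons a L ihL =>
    rw [List.flatMap_cons, mPdL_append, mPdL_replicate, List.foldr_cons, ihL]

lemma multiPd_eq_mPdL {p : ℕ} (j : Fin p → ℕ) (f : (Fin p → ℝ) → ℝ) :
    multiPd j f = mPdL ((List.finRange p).flatMap fun i => List.replicate (j i) i) f := by
  have : multiPd j f = (List.finRange p).foldr (fun i g => (pdG i)^[j i] g) f := by
    simp only [multiPd, pd_eq_pdG]
  rw [this, foldr_eq_mPdL]

lemma count_flatMap_replicate {κ : Type} [DecidableEq κ] (m : κ → ℕ) (K : List κ)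
    (hK : K.Nodup) (i : κ) :
    (K.flatMap fun b => List.replicate (m b) b).count i = if i ∈ K then m i else 0 := by
  induction K with
  | nil => simp
  | cons a K ihK =>
    rw [List.flatMap_cons, List.count_append, List.count_replicate,
      ihK (List.nodup_cons.1 hK).2]
    rcases eq_or_ne i a with h | h
    · subst h
      have : i ∉ K := (List.nodup_cons.1 hK).1
      simp [this]
    · simp [h, Ne.symm h]

lemma mem_flatMap_replicate {κ : Type} [DecidableEq κ] (m : κ → ℕ) (K : List κ) (i : κ)
    (hi : i ∈ K.flatMap fun b => List.replicate (m b) b) : m i ≠ 0 := by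
  obtain ⟨b, _, hmem⟩ := List.mem_flatMap.1 hi
  obtain ⟨hne, heq⟩ := List.mem_replicate.1 hmem
  subst heq; exact hne

/-- Lemma 5.19(iv) of the paper (classical content): for a smooth compactly
supported `f : ℝ^p → ℝ` and a multi-index `j` supported on a nonempty set `I`
of boundary indices (all `< k`) with `j_i ≥ 1` on `I`, the integral of `∂^j f`
over the model corner `ℝ₊^k × ℝ^{p-k}` equals `(-1)^{|I|}` times the integral
of `∂^{j↓} f` over the boundary face obtained by setting the coordinates in `I`
equal to `0`. -/
theorem stmt0 {p k : ℕ} (hp : 1 ≤ p) (hk : k ≤ p)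
    (f : (Fin p → ℝ) → ℝ) (hf : ContDiff ℝ (⊤ : ℕ∞) f) (hsupp : HasCompactSupport f)
    (I : Finset (Fin p)) (hI : I.Nonempty) (hIk : ∀ i ∈ I, (i : ℕ) < k)
    (j : Fin p → ℕ) (hj1 : ∀ i ∈ I, 1 ≤ j i) (hj0 : ∀ i ∉ I, j i = 0) :
    ∫ x in {x : Fin p → ℝ | ∀ i : Fin p, (i : ℕ) < k → 0 < x i}, multiPd j f x
      = (-1 : ℝ) ^ I.card *
        ∫ y in {y : {i : Fin p // i ∉ I} → ℝ |
            ∀ i : {i : Fin p // i ∉ I}, ((i : Fin p) : ℕ) < k → 0 < y i},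
          multiPd (fun i => j i - 1) f
            (fun i => if h : i ∈ I then 0 else y ⟨i, h⟩) := by
  classical
  have hfinf : ContDiff ℝ ∞ f := hf.of_le (by simp)
  set BJ := (List.finRange p).flatMap (fun i => List.replicate (j i) i) with hBJ
  set BM := (List.finRange p).flatMap (fun i => List.replicate (j i - 1) i) with hBM
  have hBJcount : ∀ i, BJ.count i = j i := by
    intro i
    rw [hBJ, count_flatMap_replicate _ _ (List.nodup_finRange p),
      if_pos (List.mem_finRange i)]
  have hBMcount : ∀ i, BM.count i = j i - 1 := by
    intro i
    rw [hBM, count_flatMap_replicate _ _ (List.nodup_finRange p),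
      if_pos (List.mem_finRange i)]
  have hmemBJ : ∀ i ∈ BJ, ¬ (i ∉ I) := fun i hi h =>
    (mem_flatMap_replicate _ _ i hi) (hj0 i h)
  have hmemBM : ∀ i ∈ BM, ¬ (i ∉ I) := fun i hi h =>
    (mem_flatMap_replicate _ _ i hi) (by rw [hj0 i h])
  rw [multiPd_eq_mPdL j f, multiPd_eq_mPdL (fun i => j i - 1) f, ← hBJ, ← hBM]
  set P : Fin p → Prop := fun i => i ∉ I with hP
  have hFcd : ContDiff ℝ ∞ (mPdL BJ f) := mPdL_contDiff hfinf BJ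
  have hFint : Integrable (mPdL BJ f) :=
    hFcd.continuous.integrable_of_hasCompactSupport (mPdL_hcs hsupp BJ)
  have hpre : (⇑(splitEquiv P).symm) ⁻¹' {x : Fin p → ℝ | ∀ i : Fin p, (i : ℕ) < k → 0 < x i}
      = {y : {i : Fin p // i ∉ I} → ℝ |
            ∀ i : {i : Fin p // i ∉ I}, ((i : Fin p) : ℕ) < k → 0 < y i}
        ×ˢ {w : {i : Fin p // ¬ i ∉ I} → ℝ | ∀ i', 0 < w i'} := by
    ext ⟨y, w⟩
    simp only [Set.mem_preimage, Set.mem_setOf_eq, Set.mem_prod, splitEquiv_symm_apply]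
    constructor
    · intro h
      refine ⟨fun i' hik => ?_, fun i' => ?_⟩
      · have := h (i' : Fin p) hik
        rwa [dif_pos i'.2] at this
      · have := h (i' : Fin p) (hIk _ (not_not.mp i'.2))
        rwa [dif_neg i'.2] at this
    · rintro ⟨h1, h2⟩ i hik
      by_cases h : P i
      · rw [dif_pos h]; exact h1 ⟨i, h⟩ hik
      · rw [dif_neg h]; exact h2 ⟨i, h⟩
  rw [setIntegral_split P hFint hpre]
  have hcardm : Fintype.card {i : Fin p // ¬ i ∉ I} = I.card := by
    rw [Fintype.card_congr (Equiv.subtypeEquivRight (fun i => not_not (a := i ∈ I)))]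
    exact Fintype.card_coe I
  set BJ2 : List {i : Fin p // ¬ i ∉ I} :=
    BJ.attach.map (fun x => ⟨x.1, hmemBJ x.1 x.2⟩) with hBJ2
  set BM2 : List {i : Fin p // ¬ i ∉ I} :=
    BM.attach.map (fun x => ⟨x.1, hmemBM x.1 x.2⟩) with hBM2
  have hBJ2map : BJ2.map Subtype.val = BJ := by
    rw [hBJ2, List.map_map]; exact List.attach_map_subtype_val BJ
  have hBM2map : BM2.map Subtype.val = BM := by
    rw [hBM2, List.map_map]; exact List.attach_map_subtype_val BM
  have hBJ2count : ∀ i' : {i : Fin p // ¬ i ∉ I}, BJ2.count i' = j i'.1 := by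
    intro i'
    have h1 : (BJ2.map Subtype.val).count i'.1 = BJ2.count i' :=
      List.count_map_of_injective _ _ Subtype.val_injective _
    rw [hBJ2map] at h1
    rw [← h1, hBJcount]
  have hBM2count : ∀ i' : {i : Fin p // ¬ i ∉ I}, BM2.count i' = j i'.1 - 1 := by
    intro i'
    have h1 : (BM2.map Subtype.val).count i'.1 = BM2.count i' :=
      List.count_map_of_injective _ _ Subtype.val_injective _
    rw [hBM2map] at h1
    rw [← h1, hBMcount]
  have hm' : ∀ i' : {i : Fin p // ¬ i ∉ I}, 1 ≤ j i'.1 :=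
    fun i' => hj1 _ (not_not.mp i'.2)
  have inner_eq : ∀ z : ({i : Fin p // i ∉ I} → ℝ),
      (∫ w in {w : {i : Fin p // ¬ i ∉ I} → ℝ | ∀ i', 0 < w i'},
          mPdL BJ f ((splitEquiv P).symm (z, w)))
        = (-1:ℝ)^(I.card) * mPdL BM f ((splitEquiv P).symm (z, 0)) := by
    intro z
    have heq : (fun w : {i : Fin p // ¬ i ∉ I} → ℝ => (splitEquiv P).symm (z, w))
        = fun w => secT1 P z + secT2 P w := funext (fun w => splitEquiv_symm_eq P z w)
    have hφd : ∀ w : {i : Fin p // ¬ i ∉ I} → ℝ,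
        HasFDerivAt (fun w : {i : Fin p // ¬ i ∉ I} → ℝ => (splitEquiv P).symm (z, w))
          (secT2 P) w := by
      intro w
      rw [heq]
      exact (secT2 P).hasFDerivAt.const_add _
    have hφcd : ContDiff ℝ ∞ (fun w : {i : Fin p // ¬ i ∉ I} → ℝ => (splitEquiv P).symm (z, w)) := by
      rw [heq]
      exact contDiff_const.add (secT2 P).contDiff
    have hfzcd : ContDiff ℝ ∞ (f ∘ (fun w : {i : Fin p // ¬ i ∉ I} → ℝ => (splitEquiv P).symm (z, w))) :=
      hfinf.comp hφcd
    have hfzcs : HasCompactSupport (f ∘ (fun w : {i : Fin p // ¬ i ∉ I} → ℝ => (splitEquiv P).symm (z, w))) :=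
      hcs_comp hφcd.continuous (fun w => norm_le_split_2 P z w) hsupp
    have hsl : mPdL BJ2 (f ∘ (fun w : {i : Fin p // ¬ i ∉ I} → ℝ => (splitEquiv P).symm (z, w)))
        = (mPdL BJ f) ∘ (fun w : {i : Fin p // ¬ i ∉ I} → ℝ => (splitEquiv P).symm (z, w)) := by
      have h := mPdL_comp_affine hφd (fun i' => secT2_single P i') hfinf BJ2
      rwa [hBJ2map] at h
    have hslM : mPdL BM2 (f ∘ (fun w : {i : Fin p // ¬ i ∉ I} → ℝ => (splitEquiv P).symm (z, w)))
        = (mPdL BM f) ∘ (fun w : {i : Fin p // ¬ i ∉ I} → ℝ => (splitEquiv P).symm (z, w)) := by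
      have h := mPdL_comp_affine hφd (fun i' => secT2_single P i') hfinf BM2
      rwa [hBM2map] at h
    have hkey := lemA (Fintype.card {i : Fin p // ¬ i ∉ I}) {i : Fin p // ¬ i ∉ I} rfl
      _ hfzcd hfzcs (fun i' => j i'.1) hm' BJ2 BM2 (by rw [beqInst_eq Subtype.instBEq]; exact hBJ2count)
        (by rw [beqInst_eq Subtype.instBEq]; exact hBM2count)
    calc ∫ w in {w : {i : Fin p // ¬ i ∉ I} → ℝ | ∀ i', 0 < w i'},
            mPdL BJ f ((splitEquiv P).symm (z, w))
        = ∫ w in {w : {i : Fin p // ¬ i ∉ I} → ℝ | ∀ i', 0 < w i'},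
            mPdL BJ2 (f ∘ (fun w : {i : Fin p // ¬ i ∉ I} → ℝ => (splitEquiv P).symm (z, w))) w := by
          apply integral_congr_ae
          filter_upwards with w
          exact (congrFun hsl w).symm
      _ = (-1:ℝ)^(Fintype.card {i : Fin p // ¬ i ∉ I}) *
            mPdL BM2 (f ∘ (fun w : {i : Fin p // ¬ i ∉ I} → ℝ => (splitEquiv P).symm (z, w))) 0 := hkey
      _ = (-1:ℝ)^(I.card) * mPdL BM f ((splitEquiv P).symm (z, 0)) := by
          rw [hcardm, congrFun hslM 0]
          rfl
  rw [integral_congr_ae (Filter.Eventually.of_forall inner_eq)]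
  rw [integral_const_mul]
  congr 1
  apply integral_congr_ae
  filter_upwards with z
  congr 1
  funext i
  rw [splitEquiv_symm_apply]
  by_cases h : i ∈ I
  · rw [dif_neg (show ¬ P i by simp [hP, h]), dif_pos h]
    rfl
  · rw [dif_pos (show P i by simp [hP, h]), dif_neg h]
end

section
/- Let R be a commutative ring and k, m, n natural numbers. Let R₁ be a k×k matrix, S₁ a k×m matrix, S₂ a k×n matrix, R₂ an m×m matrix, S an m×n matrix, T an n×m matrix and V an n×n matrix, all with entries in R, and assume that det V is a unit of R, so that V has an inverse matrix V⁻¹. Form the (k+m)×(k+m) block matrix A = fromBlocks R₁ S₁ 0 R₂, the (k+m)×n matrix B obtained by stacking S₂ above S, and the n×(k+m) matrix C obtained by placing the n×k zero matrix to the left of T. Then det(A − B·V⁻¹·C) · (det V)⁻¹ = det R₁ · ( det(R₂ − S·V⁻¹·T) · (det V)⁻¹ ); that is, the Berezinian of the block matrix [[R₁, S₁, S₂],[0, R₂, S],[0, T, V]] (with even-even block [[R₁, S₁],[0, R₂]] and odd-odd block V) equals det R₁ times the Berezinian of [[R₂, S],[T, V]]. -/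
open Matrix

namespace Matrix

variable {k m n : Type*}

theorem fromBlocks_sub {α l p : Type*} [Sub α] (A : Matrix k l α) (B : Matrix k p α)
    (C : Matrix m l α) (D : Matrix m p α) (A' : Matrix k l α) (B' : Matrix k p α)
    (C' : Matrix m l α) (D' : Matrix m p α) :
    fromBlocks A B C D - fromBlocks A' B' C' D'
      = fromBlocks (A - A') (B - B') (C - C') (D - D') := by
  ext (i | i) (j | j) <;> rfl

theorem fromRows_mul_mul_fromCols_zero_left {R : Type*} [Semiring R]
    [Fintype n] {p q : Type*} [Fintype q]
    (B₁ : Matrix k n R) (B₂ : Matrix m n R) (M : Matrix n q R) (C : Matrix q p R) :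
    fromRows B₁ B₂ * M * fromCols (0 : Matrix q k R) C
      = fromBlocks 0 (B₁ * M * C) 0 (B₂ * M * C) := by
  rw [fromRows_mul, fromRows_mul_fromCols]
  simp only [Matrix.mul_zero]

theorem det_fromBlocks_zero₂₁_sub_fromRows_mul_mul_fromCols_zero_left {R : Type*} [CommRing R]
    [Fintype k] [Fintype m] [Fintype n] [DecidableEq k] [DecidableEq m]
    (A₁₁ : Matrix k k R) (A₁₂ : Matrix k m R) (A₂₂ : Matrix m m R)
    (B₁ : Matrix k n R) (B₂ : Matrix m n R) (M : Matrix n n R) (C : Matrix n m R) :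
    (fromBlocks A₁₁ A₁₂ 0 A₂₂ - fromRows B₁ B₂ * M * fromCols 0 C).det
      = A₁₁.det * (A₂₂ - B₂ * M * C).det := by
  rw [fromRows_mul_mul_fromCols_zero_left, fromBlocks_sub, sub_zero, sub_zero,
    det_fromBlocks_zero₂₁]

end Matrix

theorem stmt4_general {R : Type*} [CommRing R] {k m n : ℕ}
    (R₁ : Matrix (Fin k) (Fin k) R) (S₁ : Matrix (Fin k) (Fin m) R)
    (S₂ : Matrix (Fin k) (Fin n) R)
    (R₂ : Matrix (Fin m) (Fin m) R) (S : Matrix (Fin m) (Fin n) R)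
    (T : Matrix (Fin n) (Fin m) R) (V : Matrix (Fin n) (Fin n) R) :
    (Matrix.fromBlocks R₁ S₁ 0 R₂ - Matrix.fromRows S₂ S * V⁻¹ * Matrix.fromCols 0 T).det
        * Ring.inverse V.det
      = R₁.det * ((R₂ - S * V⁻¹ * T).det * Ring.inverse V.det) := by
  rw [det_fromBlocks_zero₂₁_sub_fromRows_mul_mul_fromCols_zero_left, mul_assoc]

/-- Equation (6) of the paper: the Berezinian of the block matrix
`[[R₁, S₁, S₂], [0, R₂, S], [0, T, V]]` (with even-even block `[[R₁,S₁],[0,R₂]]`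
and odd-odd block `V`, where `det V` is a unit) equals
`det R₁` times the Berezinian of `[[R₂, S], [T, V]]`. -/
theorem stmt4 {R : Type*} [CommRing R] {k m n : ℕ}
    (R₁ : Matrix (Fin k) (Fin k) R) (S₁ : Matrix (Fin k) (Fin m) R)
    (S₂ : Matrix (Fin k) (Fin n) R)
    (R₂ : Matrix (Fin m) (Fin m) R) (S : Matrix (Fin m) (Fin n) R)
    (T : Matrix (Fin n) (Fin m) R) (V : Matrix (Fin n) (Fin n) R)
    (hV : IsUnit V.det) :
    (Matrix.fromBlocks R₁ S₁ 0 R₂ - Matrix.fromRows S₂ S * V⁻¹ * Matrix.fromCols 0 T).det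
        * Ring.inverse V.det
      = R₁.det * ((R₂ - S * V⁻¹ * T).det * Ring.inverse V.det) :=
  stmt4_general R₁ S₁ S₂ R₂ S T V
end

section
/- Let p ≥ 1 and let ρ₁, …, ρ_n : ℝ^p → ℝ be smooth functions which form a family of boundary functions, i.e. for every point x ∈ ℝ^p the differentials (dρ_i(x))_{i ∈ I(x)}, where I(x) = { i : ρ_i(x) = 0 }, are linearly independent linear functionals on ℝ^p. Let N = { x ∈ ℝ^p : ρ_i(x) > 0 for all i = 1,…,n }. Then the topological frontier (boundary) of N in ℝ^p equals the set { x ∈ ℝ^p : ρ_i(x) ≥ 0 for all i, and ρ_i(x) = 0 for at least one i }. In particular, the frontier of N is the disjoint union, over nonempty subsets I ⊆ {1,…,n}, of the boundary faces H_I = { x : ρ_i(x) = 0 for i ∈ I and ρ_i(x) > 0 for i ∉ I }. -/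
open Filter Topology

lemma aux_surj {V : Type*} [AddCommGroup V] [Module ℝ V] {ι : Type*} [Fintype ι]
    (f : ι → V →ₗ[ℝ] ℝ) (h : LinearIndependent ℝ f) :
    ∃ v : V, ∀ i, f i v = 1 := by
  classical
  have hsurj : Function.Surjective (LinearMap.pi f) := by
    rw [← LinearMap.range_eq_top]
    by_contra hne
    obtain ⟨φ, hφne, hφ⟩ := Submodule.exists_dual_map_eq_bot_of_lt_top
      (lt_top_iff_ne_top.2 hne) inferInstance
    set c : ι → ℝ := fun i => φ (fun j => if i = j then 1 else 0) with hc
    have hφy : ∀ y : ι → ℝ, φ y = ∑ i, y i * c i := by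
      intro y
      rw [LinearMap.pi_apply_eq_sum_univ φ y]
      simp [hc, smul_eq_mul]
    have hzero : ∀ v : V, (∑ i, c i • f i) v = 0 := by
      intro v
      have hv : φ (LinearMap.pi f v) = 0 := by
        have : LinearMap.pi f v ∈ LinearMap.range (LinearMap.pi f) :=
          LinearMap.mem_range_self _ v
        have := Submodule.mem_map_of_mem (f := φ) this
        rw [hφ] at this
        simpa using this
      rw [hφy] at hv
      simpa [LinearMap.sum_apply, LinearMap.smul_apply, smul_eq_mul, mul_comm] using hv
    have hc0 : ∀ i, c i = 0 := by
      have := Fintype.linearIndependent_iff.1 h c (by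
        ext v; exact hzero v)
      exact this
    apply hφne
    apply LinearMap.ext
    intro y
    rw [hφy]
    simp [hc0]
  obtain ⟨v, hv⟩ := hsurj (fun _ => 1)
  exact ⟨v, fun i => congrFun hv i⟩

/-- Section 5 of the paper: for a family of boundary functions `ρ₁, …, ρ_n` on
`ℝ^p`, the topological frontier of the manifold with corners
`N = {ρ₁ > 0, …, ρ_n > 0}` equals `{x | ∀ i, ρ_i(x) ≥ 0, ∃ i, ρ_i(x) = 0}`;
in particular it is the disjoint union, over nonempty index sets `I`, of the
boundary faces `H_I = {ρ_i = 0 (i ∈ I), ρ_i > 0 (i ∉ I)}`: each frontier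
point lies in `H_I` for exactly one nonempty `I`. -/
theorem stmt8 {p n : ℕ} (hp : 1 ≤ p) (ρ : Fin n → (Fin p → ℝ) → ℝ)
    (hρ : ∀ i, ContDiff ℝ (⊤ : ℕ∞) (ρ i))
    (hind : ∀ x : Fin p → ℝ,
      LinearIndependent ℝ (fun i : {i : Fin n // ρ i x = 0} => fderiv ℝ (ρ i.1) x)) :
    frontier {x : Fin p → ℝ | ∀ i, 0 < ρ i x}
        = {x : Fin p → ℝ | (∀ i, 0 ≤ ρ i x) ∧ ∃ i, ρ i x = 0} ∧
      ∀ x ∈ frontier {x : Fin p → ℝ | ∀ i, 0 < ρ i x},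
        ∃! I : Finset (Fin n), I.Nonempty ∧
          (∀ i ∈ I, ρ i x = 0) ∧ (∀ i ∉ I, 0 < ρ i x) := by
  classical
  set N : Set (Fin p → ℝ) := {x | ∀ i, 0 < ρ i x} with hN
  have hcont : ∀ i, Continuous (ρ i) := fun i => (hρ i).continuous
  have hNopen : IsOpen N := by
    have : N = ⋂ i, (ρ i) ⁻¹' Set.Ioi 0 := by
      ext x; simp [hN, Set.mem_iInter]
    rw [this]
    exact isOpen_iInter_of_finite fun i => isOpen_Ioi.preimage (hcont i)
  have hclosed : IsClosed {x : Fin p → ℝ | ∀ i, 0 ≤ ρ i x} := by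
    have : {x : Fin p → ℝ | ∀ i, 0 ≤ ρ i x} = ⋂ i, {x | 0 ≤ ρ i x} := by
      ext x; simp [Set.mem_iInter]
    rw [this]
    exact isClosed_iInter fun i => isClosed_le continuous_const (hcont i)
  -- key: nonneg points lie in closure of N
  have hkey : ∀ x : Fin p → ℝ, (∀ i, 0 ≤ ρ i x) → x ∈ closure N := by
    intro x hx
    have hli : LinearIndependent ℝ
        (fun i : {i : Fin n // ρ i x = 0} => (fderiv ℝ (ρ i.1) x : (Fin p → ℝ) →ₗ[ℝ] ℝ)) := by
      have := hind x
      exact this.map' (ContinuousLinearMap.coeLM ℝ) (by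
        rw [LinearMap.ker_eq_bot]
        exact fun a b hab => ContinuousLinearMap.coe_injective hab)
    obtain ⟨v, hv⟩ := aux_surj _ hli
    have hall : ∀ i : Fin n, ∀ᶠ t in 𝓝[>] (0:ℝ), 0 < ρ i (x + t • v) := by
      intro i
      by_cases hzi : ρ i x = 0
      · -- derivative argument
        have hd : HasDerivAt (fun t : ℝ => ρ i (x + t • v)) 1 0 := by
          have h1 : HasFDerivAt (ρ i) (fderiv ℝ (ρ i) x) (x + (0:ℝ) • v) := by
            simpa using (((hρ i).differentiable (by simp)) x).hasFDerivAt
          have h2 : HasDerivAt (fun t : ℝ => x + t • v) v 0 := by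
            simpa using ((hasDerivAt_id (0:ℝ)).smul_const v).const_add x
          have h3 := h1.comp_hasDerivAt 0 h2
          have h4 : fderiv ℝ (ρ i) x v = 1 := by
            simpa using hv ⟨i, hzi⟩
          rw [h4] at h3
          exact h3
        have hslope := hasDerivAt_iff_tendsto_slope.1 hd
        have hslope' : Tendsto (slope (fun t : ℝ => ρ i (x + t • v)) 0) (𝓝[>] 0) (𝓝 1) :=
          hslope.mono_left (nhdsWithin_mono _ (by intro t ht; exact ne_of_gt ht))
        have hev : ∀ᶠ t in 𝓝[>] (0:ℝ), 0 < slope (fun t : ℝ => ρ i (x + t • v)) 0 t :=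
          hslope' (Ioi_mem_nhds one_pos)
        filter_upwards [hev, self_mem_nhdsWithin] with t hst (htpos : 0 < t)
        have : slope (fun t : ℝ => ρ i (x + t • v)) 0 t = ρ i (x + t • v) / t := by
          simp [slope_def_field, hzi]
        rw [this] at hst
        have := mul_pos hst htpos
        rwa [div_mul_cancel₀ _ (ne_of_gt htpos)] at this
      · have hpos : 0 < ρ i x := lt_of_le_of_ne (hx i) (Ne.symm hzi)
        have hc : Tendsto (fun t : ℝ => ρ i (x + t • v)) (𝓝 0) (𝓝 (ρ i x)) := by
          have : Continuous (fun t : ℝ => ρ i (x + t • v)) :=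
            (hcont i).comp (continuous_const.add (continuous_id.smul continuous_const))
          simpa using this.tendsto 0
        filter_upwards [(hc.mono_left nhdsWithin_le_nhds) (Ioi_mem_nhds hpos)] with t ht
        exact ht
    have hallev : ∀ᶠ t in 𝓝[>] (0:ℝ), (x + t • v) ∈ N := by
      exact (eventually_all.2 hall).mono (fun t ht => ht)
    have htend : Tendsto (fun t : ℝ => x + t • v) (𝓝[>] 0) (𝓝 x) := by
      have : Continuous (fun t : ℝ => x + t • v) :=
        continuous_const.add (continuous_id.smul continuous_const)
      have := this.tendsto 0
      simp only [zero_smul, add_zero] at this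
      exact this.mono_left nhdsWithin_le_nhds
    exact mem_closure_of_tendsto htend hallev
  have hfr : frontier N = {x : Fin p → ℝ | (∀ i, 0 ≤ ρ i x) ∧ ∃ i, ρ i x = 0} := by
    rw [hNopen.frontier_eq]
    ext x
    constructor
    · rintro ⟨hc, hn⟩
      have hge : ∀ i, 0 ≤ ρ i x := by
        have hsub : N ⊆ {x : Fin p → ℝ | ∀ i, 0 ≤ ρ i x} := by
          intro y hy i
          exact le_of_lt (hy i)
        exact closure_minimal hsub hclosed hc
      refine ⟨hge, ?_⟩
      simp only [hN, Set.mem_setOf_eq] at hn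
      push_neg at hn
      obtain ⟨i, hi⟩ := hn
      exact ⟨i, le_antisymm hi (hge i)⟩
    · rintro ⟨hge, i0, hi0⟩
      refine ⟨hkey x hge, ?_⟩
      simp only [hN, Set.mem_setOf_eq]
      push_neg
      exact ⟨i0, le_of_eq hi0⟩
  refine ⟨hfr, fun x hx => ?_⟩
  rw [hfr] at hx
  obtain ⟨hge, i0, hi0⟩ := hx
  refine ⟨Finset.univ.filter (fun i => ρ i x = 0), ⟨⟨i0, by simp [hi0]⟩, ?_, ?_⟩, ?_⟩
  · intro i hi; simpa using hi
  · intro i hi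
    simp only [Finset.mem_filter, Finset.mem_univ, true_and] at hi
    exact lt_of_le_of_ne (hge i) (Ne.symm hi)
  · rintro J ⟨_, hJ0, hJpos⟩
    ext i
    simp only [Finset.mem_filter, Finset.mem_univ, true_and]
    constructor
    · intro hi; exact hJ0 i hi
    · intro hi; by_contra hni
      exact absurd hi (ne_of_gt (hJpos i hni))
end
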